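/- Let slD be the first-order operator acting on smooth functions psi : (0,π) × ℝ → ℂ^4 (coordinates (theta, phi)) by slD psi = i*Gamma_x*(∂_theta psi + (cot(theta)/2)*psi) - i*Gamma_y*(1/sin(theta))*∂_phi psi. Then for every smooth psi : (0,π) × ℝ → ℂ^4, slD(slD psi) = D_theta^2 psi + (1/sin^2(theta)) * D_phi^2 psi + Gamma_zz * (cot(theta)/sin(theta)) * D_phi psi - i*cot(theta)*D_theta psi + (1/(4*sin^2(theta))) * psi + (1/4) * psi, where D_theta := -i*∂_theta and D_phi := -i*∂_phi. -/

import Mathlib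

noncomputable section

open Complex

/-- `Γ_x = diag(σ_x, -σ_x)`. -/
def GammaX : Matrix (Fin 4) (Fin 4) ℂ :=
  !![0, 1, 0, 0; 1, 0, 0, 0; 0, 0, 0, -1; 0, 0, -1, 0]

/-- `Γ_y = diag(σ_y, -σ_y)`. -/
def GammaY : Matrix (Fin 4) (Fin 4) ℂ :=
  !![0, -I, 0, 0; I, 0, 0, 0; 0, 0, 0, I; 0, 0, -I, 0]

/-- `Γ_zz = diag(σ_z, σ_z)`. -/
def GammaZZ : Matrix (Fin 4) (Fin 4) ℂ :=
  !![1, 0, 0, 0; 0, -1, 0, 0; 0, 0, 1, 0; 0, 0, 0, -1]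

/-- Partial derivative in the first variable `θ`. -/
def pdTheta (psi : ℝ × ℝ → Fin 4 → ℂ) (p : ℝ × ℝ) : Fin 4 → ℂ :=
  deriv (fun t : ℝ => psi (t, p.2)) p.1

/-- Partial derivative in the second variable `φ`. -/
def pdPhi (psi : ℝ × ℝ → Fin 4 → ℂ) (p : ℝ × ℝ) : Fin 4 → ℂ :=
  deriv (fun t : ℝ => psi (p.1, t)) p.2

/-- `D_θ = -i ∂_θ`. -/
def DTheta (psi : ℝ × ℝ → Fin 4 → ℂ) (p : ℝ × ℝ) : Fin 4 → ℂ := (-I) • pdTheta psi p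

/-- `D_φ = -i ∂_φ`. -/
def DPhi (psi : ℝ × ℝ → Fin 4 → ℂ) (p : ℝ × ℝ) : Fin 4 → ℂ := (-I) • pdPhi psi p

/-- The Dirac operator `slD` on the 2-sphere acting on bispinors. -/
def slD (psi : ℝ × ℝ → Fin 4 → ℂ) (p : ℝ × ℝ) : Fin 4 → ℂ :=
  I • GammaX.mulVec
      (pdTheta psi p + ((Real.cos p.1 / Real.sin p.1 / 2 : ℝ) : ℂ) • psi p) -
    I • GammaY.mulVec ((((Real.sin p.1)⁻¹ : ℝ) : ℂ) • pdPhi psi p)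

theorem aux_hasDerivAt_mulVec {n : ℕ} (A : Matrix (Fin n) (Fin n) ℂ) {f : ℝ → Fin n → ℂ}
    {f' : Fin n → ℂ} {t : ℝ} (hf : HasDerivAt f f' t) :
    HasDerivAt (fun s => A.mulVec (f s)) (A.mulVec f') t := by
  have := (LinearMap.toContinuousLinearMap
      ((Matrix.mulVecLin A).restrictScalars ℝ)).hasFDerivAt (x := f t) |>.comp_hasDerivAt t hf
  simpa [Function.comp_def] using this

theorem aux_line_fst {E : Type*} [NormedAddCommGroup E] [NormedSpace ℝ E]
    {f : ℝ × ℝ → E} {L : ℝ × ℝ →L[ℝ] E} {p : ℝ × ℝ} (hf : HasFDerivAt f L p) :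
    HasDerivAt (fun t => f (t, p.2)) (L (1, 0)) p.1 :=
  hf.comp_hasDerivAt p.1 (HasDerivAt.prodMk (hasDerivAt_id p.1) (hasDerivAt_const p.1 p.2))

theorem aux_line_snd {E : Type*} [NormedAddCommGroup E] [NormedSpace ℝ E]
    {f : ℝ × ℝ → E} {L : ℝ × ℝ →L[ℝ] E} {p : ℝ × ℝ} (hf : HasFDerivAt f L p) :
    HasDerivAt (fun t => f (p.1, t)) (L (0, 1)) p.2 :=
  hf.comp_hasDerivAt p.2 (HasDerivAt.prodMk (hasDerivAt_const p.2 p.1) (hasDerivAt_id p.2))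

theorem aux_clm_line_fst {E : Type*} [NormedAddCommGroup E] [NormedSpace ℝ E]
    {F : ℝ × ℝ → (ℝ × ℝ) →L[ℝ] E} {p : ℝ × ℝ} (hF : DifferentiableAt ℝ F p) (v : ℝ × ℝ) :
    HasDerivAt (fun t => F (t, p.2) v) (fderiv ℝ F p (1, 0) v) p.1 := by
  have h := (ContinuousLinearMap.apply ℝ E v).hasFDerivAt.comp p hF.hasFDerivAt
  simpa using aux_line_fst h

theorem aux_clm_line_snd {E : Type*} [NormedAddCommGroup E] [NormedSpace ℝ E]
    {F : ℝ × ℝ → (ℝ × ℝ) →L[ℝ] E} {p : ℝ × ℝ} (hF : DifferentiableAt ℝ F p) (v : ℝ × ℝ) :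
    HasDerivAt (fun t => F (p.1, t) v) (fderiv ℝ F p (0, 1) v) p.2 := by
  have h := (ContinuousLinearMap.apply ℝ E v).hasFDerivAt.comp p hF.hasFDerivAt
  simpa using aux_line_snd h

theorem gxv (v : Fin 4 → ℂ) : GammaX.mulVec v = ![v 1, v 0, -v 3, -v 2] := by
  funext j
  fin_cases j <;> simp [GammaX, Matrix.mulVec, dotProduct, Fin.sum_univ_four]

theorem gyv (v : Fin 4 → ℂ) : GammaY.mulVec v = ![-I * v 1, I * v 0, I * v 3, -I * v 2] := by
  funext j
  fin_cases j <;> simp [GammaY, Matrix.mulVec, dotProduct, Fin.sum_univ_four]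

theorem gzv (v : Fin 4 → ℂ) : GammaZZ.mulVec v = ![v 0, -v 1, v 2, -v 3] := by
  funext j
  fin_cases j <;> simp [GammaZZ, Matrix.mulVec, dotProduct, Fin.sum_univ_four]

set_option maxHeartbeats 1000000 in
theorem aux_key (a b f btt btf bff : Fin 4 → ℂ) (sn cs : ℂ) (hsn : sn ≠ 0)
    (hpy : sn ^ 2 + cs ^ 2 = 1) :
    I • GammaX.mulVec
        (I • GammaX.mulVec (btt + ((cs / sn / 2) • b + ((-sn * sn - cs * cs) / sn ^ 2 / 2) • a)) -
            I • GammaY.mulVec (sn⁻¹ • btf + (-cs / sn ^ 2) • f) +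
          (cs / sn / 2) •
            (I • GammaX.mulVec (b + (cs / sn / 2) • a) - I • GammaY.mulVec (sn⁻¹ • f))) -
      I • GammaY.mulVec
        (sn⁻¹ • (I • GammaX.mulVec (btf + (cs / sn / 2) • f) - I • GammaY.mulVec (sn⁻¹ • bff))) =
    -I • -I • btt + (sn ^ 2)⁻¹ • -I • -I • bff + GammaZZ.mulVec ((cs / sn / sn) • -I • f) -
        (I * (cs / sn)) • -I • b + (1 / (4 * sn ^ 2)) • a + ((1 : ℂ) / 4) • a := by
  have h2 : I ^ 2 = -1 := Complex.I_sq
  have h3 : I ^ 3 = -I := by rw [pow_succ, h2]; ring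
  have h4 : I ^ 4 = 1 := by rw [pow_succ, h3]; simp [Complex.I_mul_I]
  have hq1 : (-sn * sn - cs * cs) / sn ^ 2 / 2 = -(1 / 2) - cs ^ 2 * sn⁻¹ ^ 2 / 2 := by
    field_simp
  have hq2 : -cs / sn ^ 2 = -(cs * sn⁻¹ ^ 2) := by
    ring
  have hq3 : (sn ^ 2)⁻¹ = sn⁻¹ ^ 2 := (inv_pow sn 2).symm
  have hq4 : cs / sn / sn = cs * sn⁻¹ ^ 2 := by
    ring
  have hq5 : 1 / (4 * sn ^ 2) = sn⁻¹ ^ 2 / 4 := by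
    ring
  have hq6 : cs / sn / 2 = cs * sn⁻¹ / 2 := by ring
  have hupy : sn⁻¹ ^ 2 * cs ^ 2 = sn⁻¹ ^ 2 - 1 := by
    field_simp
    linear_combination hpy
  rw [hq1, hq2, hq3, hq4, hq5, hq6]
  funext i
  fin_cases i <;>
  · simp only [gxv, gyv, gzv, Pi.add_apply, Pi.sub_apply, Pi.smul_apply, Pi.neg_apply,
      smul_eq_mul, Fin.zero_eta, Fin.mk_one,
      show (⟨2, by norm_num⟩ : Fin 4) = 2 from rfl, show (⟨3, by norm_num⟩ : Fin 4) = 3 from rfl,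
      Matrix.cons_val_zero, Matrix.cons_val_one, Matrix.head_cons, Matrix.cons_val_two,
      Matrix.tail_cons, Matrix.cons_val_three]
    ring_nf
    simp only [h2, h3, h4]
    first
      | linear_combination (a 0 / 4) * hupy
      | linear_combination (a 1 / 4) * hupy
      | linear_combination (a 2 / 4) * hupy
      | linear_combination (a 3 / 4) * hupy

/-- the explicit formula for `slD²` on smooth bispinors. -/
theorem stmt10 (psi : ℝ × ℝ → Fin 4 → ℂ)
    (hpsi : ContDiffOn ℝ (⊤ : ℕ∞) psi (Set.Ioo 0 Real.pi ×ˢ (Set.univ : Set ℝ))) :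
    ∀ p ∈ Set.Ioo 0 Real.pi ×ˢ (Set.univ : Set ℝ),
      slD (slD psi) p =
        DTheta (DTheta psi) p +
          (((Real.sin p.1 ^ 2)⁻¹ : ℝ) : ℂ) • DPhi (DPhi psi) p +
          GammaZZ.mulVec
            (((Real.cos p.1 / Real.sin p.1 / Real.sin p.1 : ℝ) : ℂ) • DPhi psi p) -
          (I * ((Real.cos p.1 / Real.sin p.1 : ℝ) : ℂ)) • DTheta psi p +
          ((1 / (4 * Real.sin p.1 ^ 2) : ℝ) : ℂ) • psi p +
          ((1 : ℂ) / 4) • psi p := by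
  intro p hp
  have hp1 : p.1 ∈ Set.Ioo 0 Real.pi := hp.1
  have hsin : Real.sin p.1 ≠ 0 := (Real.sin_pos_of_pos_of_lt_pi hp1.1 hp1.2).ne'
  set U : Set (ℝ × ℝ) := Set.Ioo 0 Real.pi ×ˢ (Set.univ : Set ℝ) with hUdef
  have hUo : IsOpen U := isOpen_Ioo.prod isOpen_univ
  have hUp : U ∈ nhds p := hUo.mem_nhds hp
  have hdiff : ∀ q ∈ U, DifferentiableAt ℝ psi q := fun q hq =>
    (hpsi.contDiffAt (hUo.mem_nhds hq)).differentiableAt (by simp)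
  have hf'cd : ContDiffOn ℝ 1 (fderiv ℝ psi) U :=
    (hpsi.of_le (WithTop.coe_le_coe.2 le_top) : ContDiffOn ℝ 2 psi U).fderiv_of_isOpen hUo (by norm_num)
  have hF1d : DifferentiableAt ℝ (fderiv ℝ psi) p :=
    (hf'cd.contDiffAt hUp).differentiableAt one_ne_zero
  set g := fderiv ℝ (fderiv ℝ psi) p with hgdef
  have hsymm : g ((0:ℝ), (1:ℝ)) ((1:ℝ), (0:ℝ)) = g ((1:ℝ), (0:ℝ)) ((0:ℝ), (1:ℝ)) :=
    second_derivative_symmetric_of_eventually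
      (by filter_upwards [hUp] with q hq; exact (hdiff q hq).hasFDerivAt)
      hF1d.hasFDerivAt _ _
  -- partial derivatives equal fderiv applications on U
  have hpdT : ∀ q ∈ U, pdTheta psi q = fderiv ℝ psi q (1, 0) := fun q hq =>
    (aux_line_fst (hdiff q hq).hasFDerivAt).deriv
  have hpdP : ∀ q ∈ U, pdPhi psi q = fderiv ℝ psi q (0, 1) := fun q hq =>
    (aux_line_snd (hdiff q hq).hasFDerivAt).deriv
  have hmemθ : ∀ᶠ t in nhds p.1, ((t : ℝ), p.2) ∈ U := by
    filter_upwards [isOpen_Ioo.mem_nhds hp1] with t ht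
    exact ⟨ht, Set.mem_univ _⟩
  have hmemφ : ∀ t : ℝ, ((p.1 : ℝ), t) ∈ U := fun t => ⟨hp1, Set.mem_univ _⟩
  -- basic line derivatives of psi and its first partials
  have hθA : HasDerivAt (fun t => psi (t, p.2)) (fderiv ℝ psi p (1, 0)) p.1 :=
    aux_line_fst (hdiff p hp).hasFDerivAt
  have hφA : HasDerivAt (fun t => psi (p.1, t)) (fderiv ℝ psi p (0, 1)) p.2 :=
    aux_line_snd (hdiff p hp).hasFDerivAt
  have hθB : HasDerivAt (fun t => fderiv ℝ psi (t, p.2) (1, 0)) (g (1, 0) (1, 0)) p.1 :=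
    aux_clm_line_fst hF1d _
  have hθC : HasDerivAt (fun t => fderiv ℝ psi (t, p.2) (0, 1)) (g (1, 0) (0, 1)) p.1 :=
    aux_clm_line_fst hF1d _
  have hφB : HasDerivAt (fun t => fderiv ℝ psi (p.1, t) (1, 0)) (g (0, 1) (1, 0)) p.2 :=
    aux_clm_line_snd hF1d _
  have hφC : HasDerivAt (fun t => fderiv ℝ psi (p.1, t) (0, 1)) (g (0, 1) (0, 1)) p.2 :=
    aux_clm_line_snd hF1d _
  -- scalar coefficient derivatives
  have hcd : HasDerivAt (fun t : ℝ => ((Real.cos t / Real.sin t / 2 : ℝ) : ℂ))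
      (((-Real.sin p.1 * Real.sin p.1 - Real.cos p.1 * Real.cos p.1) / Real.sin p.1 ^ 2 / 2
        : ℝ) : ℂ) p.1 :=
    (((Real.hasDerivAt_cos p.1).div (Real.hasDerivAt_sin p.1) hsin).div_const 2).ofReal_comp
  have hsd : HasDerivAt (fun t : ℝ => (((Real.sin t)⁻¹ : ℝ) : ℂ))
      ((-Real.cos p.1 / Real.sin p.1 ^ 2 : ℝ) : ℂ) p.1 :=
    ((Real.hasDerivAt_sin p.1).inv hsin).ofReal_comp
  -- value of slD psi at points of U
  have hSval : ∀ q ∈ U, slD psi q =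
      I • GammaX.mulVec
        (fderiv ℝ psi q (1, 0) + ((Real.cos q.1 / Real.sin q.1 / 2 : ℝ) : ℂ) • psi q) -
      I • GammaY.mulVec ((((Real.sin q.1)⁻¹ : ℝ) : ℂ) • fderiv ℝ psi q (0, 1)) := by
    intro q hq
    simp only [slD, hpdT q hq, hpdP q hq]
  -- θ-derivative of slD psi
  have hpdθS : pdTheta (slD psi) p =
      I • GammaX.mulVec (g (1, 0) (1, 0) +
        (((Real.cos p.1 / Real.sin p.1 / 2 : ℝ) : ℂ) • fderiv ℝ psi p (1, 0) +
          (((-Real.sin p.1 * Real.sin p.1 - Real.cos p.1 * Real.cos p.1) / Real.sin p.1 ^ 2 / 2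
            : ℝ) : ℂ) • psi p)) -
      I • GammaY.mulVec ((((Real.sin p.1)⁻¹ : ℝ) : ℂ) • g (1, 0) (0, 1) +
        ((-Real.cos p.1 / Real.sin p.1 ^ 2 : ℝ) : ℂ) • fderiv ℝ psi p (0, 1)) := by
    have hev : (fun t => slD psi (t, p.2)) =ᶠ[nhds p.1]
        (fun t => I • GammaX.mulVec
            (fderiv ℝ psi (t, p.2) (1, 0) +
              ((Real.cos t / Real.sin t / 2 : ℝ) : ℂ) • psi (t, p.2)) -
          I • GammaY.mulVec
            ((((Real.sin t)⁻¹ : ℝ) : ℂ) • fderiv ℝ psi (t, p.2) (0, 1))) := by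
      filter_upwards [hmemθ] with t ht
      exact hSval _ ht
    have hD : HasDerivAt (fun t => I • GammaX.mulVec
          (fderiv ℝ psi (t, p.2) (1, 0) +
            ((Real.cos t / Real.sin t / 2 : ℝ) : ℂ) • psi (t, p.2)) -
        I • GammaY.mulVec
          ((((Real.sin t)⁻¹ : ℝ) : ℂ) • fderiv ℝ psi (t, p.2) (0, 1))) _ p.1 :=
      (((aux_hasDerivAt_mulVec GammaX (hθB.add (hcd.smul hθA))).const_smul I).sub
        ((aux_hasDerivAt_mulVec GammaY (hsd.smul hθC)).const_smul I))
    have := (hev.deriv_eq).trans hD.deriv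
    rw [pdTheta, this]
  -- φ-derivative of slD psi
  have hpdφS : pdPhi (slD psi) p =
      I • GammaX.mulVec (g (0, 1) (1, 0) +
        ((Real.cos p.1 / Real.sin p.1 / 2 : ℝ) : ℂ) • fderiv ℝ psi p (0, 1)) -
      I • GammaY.mulVec ((((Real.sin p.1)⁻¹ : ℝ) : ℂ) • g (0, 1) (0, 1)) := by
    have hev : (fun t => slD psi (p.1, t)) =ᶠ[nhds p.2]
        (fun t => I • GammaX.mulVec
            (fderiv ℝ psi (p.1, t) (1, 0) +
              ((Real.cos p.1 / Real.sin p.1 / 2 : ℝ) : ℂ) • psi (p.1, t)) -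
          I • GammaY.mulVec
            ((((Real.sin p.1)⁻¹ : ℝ) : ℂ) • fderiv ℝ psi (p.1, t) (0, 1))) :=
      Filter.Eventually.of_forall fun t => hSval _ (hmemφ t)
    have hD : HasDerivAt (fun t => I • GammaX.mulVec
          (fderiv ℝ psi (p.1, t) (1, 0) +
            ((Real.cos p.1 / Real.sin p.1 / 2 : ℝ) : ℂ) • psi (p.1, t)) -
        I • GammaY.mulVec
          ((((Real.sin p.1)⁻¹ : ℝ) : ℂ) • fderiv ℝ psi (p.1, t) (0, 1)))
        (I • GammaX.mulVec (g (0, 1) (1, 0) +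
          ((Real.cos p.1 / Real.sin p.1 / 2 : ℝ) : ℂ) • fderiv ℝ psi p (0, 1)) -
        I • GammaY.mulVec ((((Real.sin p.1)⁻¹ : ℝ) : ℂ) • g (0, 1) (0, 1))) p.2 :=
      (((aux_hasDerivAt_mulVec GammaX (hφB.add (hφA.const_smul ((Real.cos p.1 / Real.sin p.1 / 2 : ℝ) : ℂ)))).const_smul I).sub
        ((aux_hasDerivAt_mulVec GammaY (hφC.const_smul (((Real.sin p.1)⁻¹ : ℝ) : ℂ))).const_smul I))
    rw [pdPhi, hev.deriv_eq, hD.deriv]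
  -- second derivatives appearing on the RHS
  have hDθDθ : DTheta (DTheta psi) p = (-I) • ((-I) • g (1, 0) (1, 0)) := by
    have hev : (fun t => DTheta psi (t, p.2)) =ᶠ[nhds p.1]
        (fun t => (-I) • fderiv ℝ psi (t, p.2) (1, 0)) := by
      filter_upwards [hmemθ] with t ht
      simp only [DTheta, hpdT _ ht]
    rw [DTheta, pdTheta, hev.deriv_eq, (hθB.fun_const_smul (-I)).deriv]
  have hDφDφ : DPhi (DPhi psi) p = (-I) • ((-I) • g (0, 1) (0, 1)) := by
    have hev : (fun t => DPhi psi (p.1, t)) =ᶠ[nhds p.2]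
        (fun t => (-I) • fderiv ℝ psi (p.1, t) (0, 1)) :=
      Filter.Eventually.of_forall fun t => by simp only [DPhi, hpdP _ (hmemφ t)]
    rw [DPhi, pdPhi, hev.deriv_eq, (hφC.fun_const_smul (-I)).deriv]
  have hDθψ : DTheta psi p = (-I) • fderiv ℝ psi p (1, 0) := by
    rw [DTheta, hpdT p hp]
  have hDφψ : DPhi psi p = (-I) • fderiv ℝ psi p (0, 1) := by
    rw [DPhi, hpdP p hp]
  -- assemble
  have hgoal : slD (slD psi) p =
      I • GammaX.mulVec (pdTheta (slD psi) p +
        ((Real.cos p.1 / Real.sin p.1 / 2 : ℝ) : ℂ) • slD psi p) -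
      I • GammaY.mulVec ((((Real.sin p.1)⁻¹ : ℝ) : ℂ) • pdPhi (slD psi) p) := rfl
  rw [hgoal, hpdθS, hpdφS, hSval p hp, hDθDθ, hDφDφ, hDθψ, hDφψ, hsymm]
  have hsn : (Real.sin p.1 : ℂ) ≠ 0 := Complex.ofReal_ne_zero.2 hsin
  have hpy : (Real.sin p.1 : ℂ) ^ 2 + (Real.cos p.1 : ℂ) ^ 2 = 1 := by
    rw [← Complex.ofReal_pow, ← Complex.ofReal_pow, ← Complex.ofReal_add,
      Real.sin_sq_add_cos_sq, Complex.ofReal_one]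
  push_cast
  have hsn' : Complex.sin (p.1 : ℂ) ≠ 0 := by
    rw [← Complex.ofReal_sin]
    exact_mod_cast hsin
  exact aux_key _ _ _ _ _ _ _ _ hsn' (Complex.sin_sq_add_cos_sq _)

end
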